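/- arXiv:1802.04769 — 2 statements merged into one kernel-verified Lean document; each statement's English description precedes it below -/
import Mathlib

section
/- Let ν > 1 and ω, A, V, R > 0, and for r ∈ (0,1) define the dual function q(r) = ω·(A/r)^r·((ν−1)·V)^{1/(ν−1)}·(R/(1−r))^{1−r}·(r + 1/(ν−1))^{r+1/(ν−1)}·(1−r)^{1−r}. Then weak duality holds for the geometric program (P1): for every r ∈ (0,1) and every λ > 0, S > 0 satisfying A·λ^{−1} + V·S^{1−ν} ≤ 1 and R·λ^{−1} ≤ 1, one has q(r) ≤ ω·λ·S. -/
/-!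
With `c = 1/(ν-1)`, `u = A/λ`, `v = V S^{1-ν}` the constraints read `u + v ≤ 1` and `R ≤ λ`.
Weighted AM–GM with weights `r, c` gives `(u/r)^r (v/c)^c (r+c)^{r+c} ≤ (u+v)^{r+c} ≤ 1`, and
`q(r)` factors as `ω λ^r S · (u/r)^r (v/c)^c (r+c)^{r+c} · R^{1-r}`, which is therefore at most
`ω λ^r S λ^{1-r} = ω λ S`.
-/

open Real

theorem rpow_div_mul_rpow_div_le_add_div_add_rpow {a b u v : ℝ} (ha : 0 < a) (hb : 0 < b)
    (hu : 0 ≤ u) (hv : 0 ≤ v) :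
    (u / a) ^ a * (v / b) ^ b ≤ ((u + v) / (a + b)) ^ (a + b) := by
  have hab : 0 < a + b := by linarith
  have amgm := geom_mean_le_arith_mean2_weighted (w₁ := a / (a + b)) (w₂ := b / (a + b))
    (p₁ := u / a) (p₂ := v / b) (by positivity) (by positivity) (by positivity) (by positivity)
    (by field_simp)
  have mean_eq : a / (a + b) * (u / a) + b / (a + b) * (v / b) = (u + v) / (a + b) := by
    field_simp
  rw [mean_eq] at amgm
  have := rpow_le_rpow (by positivity) amgm hab.le
  rwa [mul_rpow (by positivity) (by positivity), ← rpow_mul (by positivity),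
    ← rpow_mul (by positivity), div_mul_cancel₀ _ hab.ne', div_mul_cancel₀ _ hab.ne'] at this

theorem rpow_div_mul_rpow_div_mul_add_rpow_le_one {a b u v : ℝ} (ha : 0 < a) (hb : 0 < b)
    (hu : 0 ≤ u) (hv : 0 ≤ v) (huv : u + v ≤ 1) :
    (u / a) ^ a * (v / b) ^ b * (a + b) ^ (a + b) ≤ 1 :=
  calc (u / a) ^ a * (v / b) ^ b * (a + b) ^ (a + b)
      ≤ ((u + v) / (a + b)) ^ (a + b) * (a + b) ^ (a + b) := by
        gcongr; exact rpow_div_mul_rpow_div_le_add_div_add_rpow ha hb hu hv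
    _ = (u + v) ^ (a + b) := by
        rw [← mul_rpow (by positivity) (by positivity), div_mul_cancel₀ _ (by positivity)]
    _ ≤ 1 := rpow_le_one (by positivity) huv (by positivity)

theorem sub_one_mul_rpow_one_div_sub_one_eq_mul {ν V S : ℝ} (hν : 1 < ν) (hV : 0 ≤ V)
    (hS : 0 < S) :
    ((ν - 1) * V) ^ (1 / (ν - 1)) = S * (V * S ^ (1 - ν) / (1 / (ν - 1))) ^ (1 / (ν - 1)) := by
  have hν1 : ν - 1 ≠ 0 := by linarith
  rw [show V * S ^ (1 - ν) / (1 / (ν - 1)) = (ν - 1) * V * S ^ (1 - ν) by field_simp,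
    mul_rpow (x := (ν - 1) * V) (by positivity) (by positivity), ← rpow_mul hS.le,
    show (1 - ν) * (1 / (ν - 1)) = -1 by field_simp; ring, rpow_neg_one,
    mul_left_comm, mul_inv_cancel₀ hS.ne', mul_one]

/-- Weak duality for the geometric program (P1): for every dual variable r ∈ (0,1) and
    every primal feasible pair λ, S > 0 (i.e. A·λ⁻¹ + V·S^{1−ν} ≤ 1 and R·λ⁻¹ ≤ 1),
    the dual function q(r) is a lower bound for the primal objective ω·λ·S. -/
theorem gp_weak_duality (ν ω A V R : ℝ) (hν : 1 < ν)
    (hω : 0 < ω) (hA : 0 < A) (hV : 0 < V) (hR : 0 < R) :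
    ∀ r : ℝ, r ∈ Set.Ioo (0 : ℝ) 1 →
      ∀ lam S : ℝ, 0 < lam → 0 < S →
        A * lam⁻¹ + V * S ^ (1 - ν) ≤ 1 → R * lam⁻¹ ≤ 1 →
          ω * (A / r) ^ r * ((ν - 1) * V) ^ (1 / (ν - 1)) * (R / (1 - r)) ^ (1 - r) *
              (r + 1 / (ν - 1)) ^ (r + 1 / (ν - 1)) * (1 - r) ^ (1 - r)
            ≤ ω * lam * S := by
  rintro r ⟨hr0, hr1⟩ lam S hlam hS hposy hmono
  set c := 1 / (ν - 1)
  have hc : 0 < c := one_div_pos.mpr (by linarith)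
  have h1r : 0 < 1 - r := by linarith
  have hA_eq : (A / r) ^ r = lam ^ r * (A * lam⁻¹ / r) ^ r := by
    rw [← mul_rpow hlam.le (by positivity)]; field_simp
  have hR_eq : (R / (1 - r)) ^ (1 - r) * (1 - r) ^ (1 - r) = R ^ (1 - r) := by
    rw [← mul_rpow (by positivity) h1r.le, div_mul_cancel₀ _ h1r.ne']
  have hR_le : R ^ (1 - r) ≤ lam ^ (1 - r) := by
    gcongr
    rwa [mul_inv_le_iff₀ hlam, one_mul] at hmono
  have hdual := rpow_div_mul_rpow_div_mul_add_rpow_le_one hr0 hc (by positivity)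
    (by positivity) hposy
  calc ω * (A / r) ^ r * ((ν - 1) * V) ^ c * (R / (1 - r)) ^ (1 - r) * (r + c) ^ (r + c)
          * (1 - r) ^ (1 - r)
        = ω * lam ^ r * S * ((A * lam⁻¹ / r) ^ r * (V * S ^ (1 - ν) / c) ^ c * (r + c) ^ (r + c))
          * R ^ (1 - r) := by
          rw [hA_eq, sub_one_mul_rpow_one_div_sub_one_eq_mul hν hV.le hS, ← hR_eq]; ring
      _ ≤ ω * lam ^ r * S * 1 * lam ^ (1 - r) := by gcongr
      _ = ω * lam * S := by
          rw [mul_one, mul_right_comm, mul_assoc ω, ← rpow_add hlam, add_sub_cancel, rpow_one]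
end

section
/- Let ν > 1 and ω, A, V, R > 0, and for r ∈ (0,1) define q(r) = ω·(A/r)^r·((ν−1)·V)^{1/(ν−1)}·(R/(1−r))^{1−r}·(r + 1/(ν−1))^{r+1/(ν−1)}·(1−r)^{1−r}. Then the function r ↦ log(q(r)) is strictly concave on the open interval (0,1). -/
/-! Taking logarithms, the factors `(1 - r) ^ (-(1 - r))` and `(1 - r) ^ (1 - r)` cancel, and
`log q` is an affine function of `r` plus `h r = (r + k) log (r + k) - r log r`, where
`k = 1 / (ν - 1)`. Since `h' r = log (1 + k / r)` is strictly decreasing, `h` is strictly concave. -/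

open Real Set

theorem strictConcaveOn_mul_log_add_sub_mul_log {k : ℝ} (hk : 0 < k) :
    StrictConcaveOn ℝ (Ici 0) fun x => (x + k) * log (x + k) - x * log x := by
  refine StrictAntiOn.strictConcaveOn_of_deriv (convex_Ici 0) (by fun_prop) ?_
  rw [interior_Ici]
  have hderiv : ∀ x ∈ Ioi (0 : ℝ),
      deriv (fun x => (x + k) * log (x + k) - x * log x) x = log (1 + k / x) := by
    intro x (hx : 0 < x)
    have hshift := (hasDerivAt_mul_log (x := x + k) (by positivity)).comp_add_const x k
    rw [(hshift.fun_sub (hasDerivAt_mul_log hx.ne')).deriv, add_sub_add_right_eq_sub,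
      ← log_div (by positivity) hx.ne']
    congr 1
    field_simp
  intro x (hx : 0 < x) y (hy : 0 < y) hxy
  rw [hderiv x hx, hderiv y hy]
  exact log_lt_log (by positivity) (by gcongr)

theorem log_dual_eq {ω A C R k r : ℝ} (hω : 0 < ω) (hA : 0 < A) (hC : 0 < C) (hR : 0 < R)
    (hk : 0 < k) (hr : r ∈ Ioo (0 : ℝ) 1) :
    log (ω * (A / r) ^ r * C ^ k * (R / (1 - r)) ^ (1 - r) * (r + k) ^ (r + k) *
        (1 - r) ^ (1 - r)) =
      (log ω + k * log C + log R) + (log A - log R) * r +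
        ((r + k) * log (r + k) - r * log r) := by
  obtain ⟨hr₀, hr₁⟩ := hr
  have h1r : 0 < 1 - r := sub_pos.2 hr₁
  rw [log_mul (by positivity) (by positivity), log_mul (by positivity) (by positivity),
    log_mul (by positivity) (by positivity), log_mul (by positivity) (by positivity),
    log_mul (by positivity) (by positivity), log_rpow (by positivity), log_rpow hC,
    log_rpow (by positivity), log_rpow (by positivity), log_rpow h1r,
    log_div hA.ne' hr₀.ne', log_div hR.ne' h1r.ne']
  ring

/-- The logarithm of the dual function q of the geometric program (P1) is strictly
    concave on the open interval (0,1). -/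
theorem log_dual_strictConcave (ν ω A V R : ℝ) (hν : 1 < ν)
    (hω : 0 < ω) (hA : 0 < A) (hV : 0 < V) (hR : 0 < R) :
    StrictConcaveOn ℝ (Set.Ioo (0 : ℝ) 1) (fun r : ℝ =>
      Real.log (ω * (A / r) ^ r * ((ν - 1) * V) ^ (1 / (ν - 1)) *
        (R / (1 - r)) ^ (1 - r) * (r + 1 / (ν - 1)) ^ (r + 1 / (ν - 1)) *
        (1 - r) ^ (1 - r))) := by
  have hk : 0 < 1 / (ν - 1) := one_div_pos.2 (sub_pos.2 hν)
  have hC : 0 < (ν - 1) * V := mul_pos (sub_pos.2 hν) hV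
  have haffine : ConcaveOn ℝ (Ioo 0 1) fun r : ℝ =>
      (log ω + 1 / (ν - 1) * log ((ν - 1) * V) + log R) + (log A - log R) * r :=
    (concaveOn_const _ (convex_Ioo 0 1)).add
      ((LinearMap.mulLeft ℝ (log A - log R)).concaveOn (convex_Ioo 0 1))
  have hentropy := (strictConcaveOn_mul_log_add_sub_mul_log hk).subset
    (Ioo_subset_Ioi_self.trans Ioi_subset_Ici_self) (convex_Ioo 0 1)
  exact (haffine.add_strictConcaveOn hentropy).congr
    fun r hr => (log_dual_eq hω hA hC hR hk hr).symm
end
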